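/- Let A be an H-simple algebra with a generalized H-action over an arbitrary field F (H a unital associative F-algebra). Then the sequence of H-codimensions is non-decreasing: c_n^H(A) ≤ c_{n+1}^H(A) for all n ∈ ℕ. -/

import Mathlib

open Filter Finset Submodule

noncomputable section

namespace PIExp

/-- The multiset of leaves (occurrences of generators) of a non-associative word. -/
def mleaves {α : Type} : FreeMagma α → Multiset α
  | .of a => {a}
  | .mul x y => mleaves x + mleaves y

variable (F : Type) [Field F] (S : Type)

/-- The absolutely free non-associative algebra on `X = {x_1, x_2, …}`
with symbols from `S` (the generator `(i, s)` plays the role of `x_i^s`). -/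
abbrev FreeNA : Type := FreeNonUnitalNonAssocAlgebra F (ℕ × S)

/-- A non-associative word in the generators, viewed inside the free algebra. -/
def embedMonomial : FreeMagma (ℕ × S) →ₙ* FreeNA F S :=
  FreeMagma.lift (FreeNonUnitalNonAssocAlgebra.of F)

/-- `Wn F S n` is the space of multilinear elements of degree `n` in `x_0, …, x_{n-1}`:
the span of all words `x_{σ(0)}^{s_0} ⋯ x_{σ(n-1)}^{s_{n-1}}` (all bracket arrangements). -/
def Wn (n : ℕ) : Submodule F (FreeNA F S) :=
  Submodule.span F
    {f | ∃ w : FreeMagma (ℕ × S), (mleaves w).map Prod.fst = Multiset.range n ∧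
      f = embedMonomial F S w}

/-- The substitution `x_i ↦ x_{g i}` (with the symbols untouched),
as an algebra endomorphism of the free algebra. -/
def relabelHom (g : ℕ → ℕ) : FreeNA F S →ₙₐ[F] FreeNA F S :=
  FreeNonUnitalNonAssocAlgebra.lift F
    (fun p : ℕ × S => FreeNonUnitalNonAssocAlgebra.of F (g p.1, p.2))

/-- `relabelHom` as a linear endomorphism. -/
def relabelL (g : ℕ → ℕ) : FreeNA F S →ₗ[F] FreeNA F S where
  toFun := relabelHom F S g
  map_add' := map_add _
  map_smul' := map_smul _

variable {A : Type} [NonUnitalNonAssocSemiring A] [Module F A]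
  [SMulCommClass F A A] [IsScalarTower F A A]

variable (A) in
/-- The ideal of polynomial `H`-identities of an algebra `A` with a generalized `H`-action:
all elements of the free algebra vanishing under every substitution `x_i^h ↦ h • ψ i`. -/
def IdH (H : Type) [Semiring H] [Module H A] : Submodule F (FreeNA F H) :=
  ⨅ ψ : ℕ → A,
    LinearMap.ker ((FreeNonUnitalNonAssocAlgebra.lift F (fun p : ℕ × H => p.2 • ψ p.1) :
      FreeNA F H →ₙₐ[F] A) : FreeNA F H →ₗ[F] A)

variable (A) in
/-- The ideal of graded polynomial identities of a `T`-graded algebra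
`A = ⊕_t comp t`: elements vanishing under all graded substitutions `x_i^{(t)} ↦ ψ (i,t) ∈ comp t`. -/
def IdGr (T : Type) (comp : T → Submodule F A) : Submodule F (FreeNA F T) :=
  ⨅ ψ : {ψ : ℕ × T → A // ∀ p, ψ p ∈ comp p.2},
    LinearMap.ker ((FreeNonUnitalNonAssocAlgebra.lift F (fun p : ℕ × T => ψ.1 p) :
      FreeNA F T →ₙₐ[F] A) : FreeNA F T →ₗ[F] A)

variable (A) in
/-- The ideal of ordinary polynomial identities of `A` (the symbols are trivial). -/
def IdOrd : Submodule F (FreeNA F Unit) :=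
  ⨅ ψ : ℕ → A,
    LinearMap.ker ((FreeNonUnitalNonAssocAlgebra.lift F (fun p : ℕ × Unit => ψ p.1) :
      FreeNA F Unit →ₙₐ[F] A) : FreeNA F Unit →ₗ[F] A)

/-- The `n`-th codimension attached to an ideal of identities `I`:
`dim (W_n / (W_n ∩ I))`, computed as the image of `W_n` in the quotient by `I`. -/
def codim (I : Submodule F (FreeNA F S)) (n : ℕ) : ℕ :=
  Module.finrank F ((Wn F S n).map I.mkQ)

/-- The `n`-th codimension as a cardinal (for possibly infinite-dimensional situations). -/
def codimRank (I : Submodule F (FreeNA F S)) (n : ℕ) : Cardinal :=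
  Module.rank F ((Wn F S n).map I.mkQ)

end PIExp
namespace PIExp

/-- The parts of a partition `p ⊢ n`, listed in non-increasing order:
`partFn p 0 = λ_1`, `partFn p 1 = λ_2`, … (`0` beyond the number of parts). -/
def partFn {n : ℕ} (p : Nat.Partition n) : ℕ → ℕ :=
  fun i => ((p.parts.sort (· ≤ ·)).reverse).getD i 0

/-- The cell (row, column) of the `k`-th box (0-indexed) in the canonical
row-by-row filling of the Young diagram with row lengths `lam`. -/
def cellOf (lam : ℕ → ℕ) : ℕ → ℕ × ℕ
  | 0 => (0, 0)
  | k + 1 =>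
      let c := cellOf lam k
      if c.2 + 1 < lam c.1 then (c.1, c.2 + 1) else (c.1 + 1, 0)

/-- The canonical Young tableau of shape `p`: the cell of each of the numbers `0, …, n-1`. -/
def canonT {n : ℕ} (p : Nat.Partition n) : Fin n → ℕ × ℕ :=
  fun m => cellOf (partFn p) (m : ℕ)

/-- A permutation of `Fin n` viewed as a map `ℕ → ℕ`. -/
def permNat {n : ℕ} (σ : Equiv.Perm (Fin n)) : ℕ → ℕ :=
  fun i => if h : i < n then (σ ⟨i, h⟩ : ℕ) else i

/-- The row stabilizer `R_{T}` of a tableau `T` (given by the cell of each number). -/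
def rowStab {n : ℕ} (Tb : Fin n → ℕ × ℕ) : Finset (Equiv.Perm (Fin n)) :=
  Finset.univ.filter fun π => ∀ m, (Tb (π m)).1 = (Tb m).1

/-- The column stabilizer `C_{T}` of a tableau `T`. -/
def colStab {n : ℕ} (Tb : Fin n → ℕ × ℕ) : Finset (Equiv.Perm (Fin n)) :=
  Finset.univ.filter fun π => ∀ m, (Tb (π m)).2 = (Tb m).2

variable (F : Type) [Field F] (S : Type)

/-- The Young symmetrizer `e_T = a_T b_T = Σ_{π ∈ R_T} Σ_{σ ∈ C_T} (sign σ) πσ`, acting on the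
free algebra by permutation of the variables. -/
def youngE {n : ℕ} (Tb : Fin n → ℕ × ℕ) : FreeNA F S →ₗ[F] FreeNA F S :=
  ∑ π ∈ rowStab Tb, ∑ σ ∈ colStab Tb,
    ((Equiv.Perm.sign σ : ℤ) : F) • relabelL F S (permNat (π * σ))

/-- The Young symmetrizer `e*_T = b_T a_T = Σ_{σ ∈ C_T} Σ_{π ∈ R_T} (sign σ) σπ`. -/
def youngEStar {n : ℕ} (Tb : Fin n → ℕ × ℕ) : FreeNA F S →ₗ[F] FreeNA F S :=
  ∑ σ ∈ colStab Tb, ∑ π ∈ rowStab Tb,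
    ((Equiv.Perm.sign σ : ℤ) : F) • relabelL F S (permNat (σ * π))

/-- The multiplicity `m(A, H, λ)` of the irreducible `S_n`-character `χ(λ)` in the `n`-th
cocharacter attached to the ideal of identities `I`; it equals
`dim e_{T_λ}·(W_n/(W_n ∩ I))`, computed here via the canonical tableau of shape `λ`. -/
def mult (I : Submodule F (FreeNA F S)) {n : ℕ} (p : Nat.Partition n) : ℕ :=
  Module.finrank F (((Wn F S n).map (youngE F S (canonT p))).map I.mkQ)

/-- The `n`-th colength `ℓ_n = Σ_{λ ⊢ n} m(A, H, λ)` attached to an ideal of identities `I`. -/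
def colength (I : Submodule F (FreeNA F S)) (n : ℕ) : ℕ :=
  ∑ p : Nat.Partition n, mult F S I p

/-- The function `Φ(x_1, …, x_s) = 1 / (x_1^{x_1} ⋯ x_s^{x_s})` (with `0^0 = 1`). -/
def Phi (s : ℕ) (x : Fin s → ℝ) : ℝ :=
  (∏ i, Real.rpow (x i) (x i))⁻¹

/-- `max { Φ(λ_1/n, …, λ_s/n) : λ ⊢ n, m(A,H,λ) ≠ 0 }`. -/
def maxPhi (s : ℕ) (I : Submodule F (FreeNA F S)) (n : ℕ) : ℝ :=
  sSup {r : ℝ | ∃ p : Nat.Partition n, mult F S I p ≠ 0 ∧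
    r = Phi s (fun i => (partFn p (i : ℕ) : ℝ) / (n : ℝ))}

/-- `d(A) = limsup_n max { Φ(λ_1/n, …, λ_s/n) : λ ⊢ n, m(A,H,λ) ≠ 0 }`. -/
def dVal (s : ℕ) (I : Submodule F (FreeNA F S)) : ℝ :=
  Filter.limsup (fun n : ℕ => maxPhi F S s I n) Filter.atTop

end PIExp
namespace PIExp

/-- `A` is an algebra with a generalized `H`-action: for every `h ∈ H` there exist
`h'_i, h''_i, h'''_i, h''''_i ∈ H` with
`h(ab) = Σ_i ((h'_i a)(h''_i b) + (h'''_i b)(h''''_i a))` for all `a, b ∈ A`. -/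
def IsGenAction (H A : Type) [Semiring H] [NonUnitalNonAssocSemiring A] [Module H A] : Prop :=
  ∀ h : H, ∃ (k : ℕ) (h₁ h₂ h₃ h₄ : Fin k → H), ∀ a b : A,
    h • (a * b) = ∑ i : Fin k, ((h₁ i • a) * (h₂ i • b) + (h₃ i • b) * (h₄ i • a))

/-- `A` is `H`-simple: `A² ≠ 0` and `A` has no `H`-invariant two-sided ideals
other than `0` and `A`. -/
def IsHSimple (F H A : Type) [Field F] [Semiring H] [NonUnitalNonAssocSemiring A]
    [Module F A] [Module H A] : Prop :=
  (∃ a b : A, a * b ≠ 0) ∧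
    ∀ I : Submodule F A,
      (∀ a : A, ∀ x ∈ I, a * x ∈ I) → (∀ a : A, ∀ x ∈ I, x * a ∈ I) →
      (∀ h : H, ∀ x ∈ I, h • x ∈ I) → I = ⊥ ∨ I = ⊤

/-- `comp : T → Submodule F A` is a grading of `A` by the set `T`:
`A = ⊕_{t ∈ T} A^{(t)}` and for all `s, t` there is `r` with `A^{(s)} A^{(t)} ⊆ A^{(r)}`. -/
def IsGrading (F T A : Type) [Field F] [NonUnitalNonAssocSemiring A] [Module F A]
    (comp : T → Submodule F A) : Prop :=
  iSupIndep comp ∧ (⨆ t, comp t) = ⊤ ∧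
    ∀ s t : T, ∃ r : T, ∀ a ∈ comp s, ∀ b ∈ comp t, a * b ∈ comp r

/-- A graded algebra is graded-simple: `A² ≠ 0` and the only graded two-sided ideals
are `0` and `A`. -/
def IsGradedSimple (F T A : Type) [Field F] [NonUnitalNonAssocSemiring A] [Module F A]
    (comp : T → Submodule F A) : Prop :=
  (∃ a b : A, a * b ≠ 0) ∧
    ∀ I : Submodule F A,
      (∀ a : A, ∀ x ∈ I, a * x ∈ I) → (∀ a : A, ∀ x ∈ I, x * a ∈ I) →
      (I = ⨆ t, I ⊓ comp t) → I = ⊥ ∨ I = ⊤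

end PIExp

/-!
For `n ≥ 1`, substitute `x_{n-1} ↦ x_{n-1} x_n` (expanded through the generalized `H`-action so
that the result is again an `H`-polynomial). This maps `W_n` into `W_{n+1}` and preserves
`H`-identities. Conversely, if the image of `f ∈ W_n` is an identity, then `f`, being linear in
`x_{n-1}`, vanishes whenever `x_{n-1}` is evaluated at a product; `H`-simplicity forces `A = A²`,
so `f` is an identity. Hence `W_n / (W_n ∩ Id^H(A))` embeds into `W_{n+1} / (W_{n+1} ∩ Id^H(A))`.
-/

universe u

namespace PIExp

open FreeNonUnitalNonAssocAlgebra

theorem rank_map_mkQ_le_of_mem_iff {R : Type*} {M N : Type u} [Ring R] [AddCommGroup M] [Module R M]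
    [AddCommGroup N] [Module R N] {I W : Submodule R M} {J W' : Submodule R N}
    (L : M →ₗ[R] N) (hW : W.map L ≤ W') (hL : ∀ x ∈ W, L x ∈ J ↔ x ∈ I) :
    Module.rank R (W.map I.mkQ) ≤ Module.rank R (W'.map J.mkQ) := by
  set q := I.mkQ ∘ₗ W.subtype
  set q' := J.mkQ ∘ₗ L ∘ₗ W.subtype
  have hker : LinearMap.ker q = LinearMap.ker q' := by
    ext x
    simp [q, q', Submodule.Quotient.mk_eq_zero, hL x x.2]
  calc Module.rank R (W.map I.mkQ) = Module.rank R (LinearMap.range q) := by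
        rw [LinearMap.range_comp, Submodule.range_subtype]
    _ = Module.rank R (LinearMap.range q') := by
        rw [← q.quotKerEquivRange.rank_eq, ← q'.quotKerEquivRange.rank_eq, hker]
    _ = Module.rank R ((W.map L).map J.mkQ) := by
        rw [LinearMap.range_comp, LinearMap.range_comp, Submodule.range_subtype]
    _ ≤ Module.rank R (W'.map J.mkQ) := Submodule.rank_mono (Submodule.map_mono hW)

theorem mleaves_ne_zero {α : Type} (w : FreeMagma α) : mleaves w ≠ 0 := by
  induction w with
  | ih1 a => exact Multiset.singleton_ne_zero a
  | ih2 x y ihx _ => exact fun h => ihx (add_eq_zero.mp h).1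

section Monomials

variable (F : Type) [Field F] (S : Type)

def spanMonomials (M : Multiset ℕ) : Submodule F (FreeNA F S) :=
  span F {f | ∃ w : FreeMagma (ℕ × S), (mleaves w).map Prod.fst = M ∧ f = embedMonomial F S w}

theorem Wn_zero : Wn F S 0 = ⊥ := by
  refine eq_bot_iff.mpr (span_le.mpr ?_)
  rintro _ ⟨w, hw, rfl⟩
  rw [Multiset.range_zero, Multiset.map_eq_zero] at hw
  exact absurd hw (mleaves_ne_zero w)

variable {F S}

theorem embedMonomial_of (a : ℕ × S) : embedMonomial F S (FreeMagma.of a) = of F a := by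
  simp [embedMonomial]

theorem embedMonomial_mem_spanMonomials (w : FreeMagma (ℕ × S)) :
    embedMonomial F S w ∈ spanMonomials F S ((mleaves w).map Prod.fst) :=
  subset_span ⟨w, rfl, rfl⟩

theorem of_mem_spanMonomials (i : ℕ) (s : S) : of F (i, s) ∈ spanMonomials F S {i} :=
  embedMonomial_of (F := F) (i, s) ▸ embedMonomial_mem_spanMonomials (FreeMagma.of (i, s))

theorem mul_mem_spanMonomials {M N : Multiset ℕ} {u v : FreeNA F S}
    (hu : u ∈ spanMonomials F S M) (hv : v ∈ spanMonomials F S N) :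
    u * v ∈ spanMonomials F S (M + N) := by
  have huv := apply_mem_map₂ (LinearMap.mul F (FreeNA F S)) hu hv
  rw [spanMonomials, spanMonomials, map₂_span_span] at huv
  refine span_le.mpr ?_ huv
  rintro _ ⟨_, ⟨x, hx, rfl⟩, _, ⟨y, hy, rfl⟩, rfl⟩
  refine subset_span ⟨x * y, ?_, (map_mul _ x y).symm⟩
  change (mleaves x + mleaves y).map Prod.fst = M + N
  rw [Multiset.map_add, hx, hy]

theorem count_range_succ_self (m : ℕ) : (Multiset.range (m + 1)).count m = 1 :=
  Multiset.count_eq_one_of_mem (Multiset.nodup_range _) (Multiset.self_mem_range_succ m)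

end Monomials

section Evaluation

variable (F : Type) [Field F] {H A : Type} [Semiring H] [NonUnitalNonAssocSemiring A]
  [Module F A] [SMulCommClass F A A] [IsScalarTower F A A] [Module H A]

def evalH (ψ : ℕ → A) : FreeNA F H →ₙₐ[F] A :=
  lift F fun p : ℕ × H => p.2 • ψ p.1

variable {F}

theorem evalH_of (ψ : ℕ → A) (p : ℕ × H) : evalH F ψ (of F p) = p.2 • ψ p.1 :=
  lift_of_apply F _ _

theorem mem_IdH_iff {f : FreeNA F H} : f ∈ IdH F A H ↔ ∀ ψ : ℕ → A, evalH F ψ f = 0 := by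
  simp [IdH, evalH, Submodule.mem_iInf, LinearMap.mem_ker]

theorem evalH_embedMonomial_congr {ψ₁ ψ₂ : ℕ → A} (w : FreeMagma (ℕ × H))
    (h : ∀ i ∈ (mleaves w).map Prod.fst, ψ₁ i = ψ₂ i) :
    evalH F ψ₁ (embedMonomial F H w) = evalH F ψ₂ (embedMonomial F H w) := by
  induction w with
  | ih1 a => simp [embedMonomial_of, evalH_of, h a.1 (by simp [mleaves])]
  | ih2 x y ihx ihy =>
    simp only [mleaves, Multiset.map_add, Multiset.mem_add] at h
    simp only [map_mul, ihx fun i hi => h i (.inl hi), ihy fun i hi => h i (.inr hi)]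

theorem evalH_congr_of_mem_spanMonomials {ψ₁ ψ₂ : ℕ → A} {M : Multiset ℕ} {f : FreeNA F H}
    (hf : f ∈ spanMonomials F H M) (h : ∀ i ∈ M, ψ₁ i = ψ₂ i) :
    evalH F ψ₁ f = evalH F ψ₂ f := by
  induction hf using span_induction with
  | mem _ hx =>
    obtain ⟨w, rfl, rfl⟩ := hx
    exact evalH_embedMonomial_congr w h
  | zero => simp
  | add _ _ _ _ hx hy => simp [hx, hy]
  | smul _ _ _ hx => simp [hx]

variable [SMulCommClass F H A]

theorem exists_linearMap_evalH_update_embedMonomial (ψ : ℕ → A) {m : ℕ}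
    (w : FreeMagma (ℕ × H)) (hw : ((mleaves w).map Prod.fst).count m = 1) :
    ∃ E : A →ₗ[F] A, ∀ u, E u = evalH F (Function.update ψ m u) (embedMonomial F H w) := by
  have h_indep {v : FreeMagma (ℕ × H)} (hv : ((mleaves v).map Prod.fst).count m = 0) (u : A) :
      evalH F (Function.update ψ m u) (embedMonomial F H v) = evalH F ψ (embedMonomial F H v) :=
    evalH_embedMonomial_congr v fun i hi =>
      Function.update_of_ne (by rintro rfl; exact Multiset.count_eq_zero.mp hv hi) _ _
  induction w with
  | ih1 a =>
    have ha : a.1 = m := by simpa [mleaves, Multiset.count_singleton, eq_comm] using hw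
    refine ⟨{ toFun := (a.2 • ·), map_add' := smul_add a.2
              map_smul' := fun c u => (smul_comm c a.2 u).symm }, fun u => ?_⟩
    simp [embedMonomial_of, evalH_of, ha]
  | ih2 x y ihx ihy =>
    simp only [mleaves, Multiset.map_add, Multiset.count_add] at hw
    rcases Nat.add_eq_one_iff.mp hw with ⟨hx, hy⟩ | ⟨hx, hy⟩
    · obtain ⟨E, hE⟩ := ihy hy
      exact ⟨LinearMap.mulLeft F (evalH F ψ (embedMonomial F H x)) ∘ₗ E, fun u => by
        simp [hE, h_indep hx]⟩
    · obtain ⟨E, hE⟩ := ihx hx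
      exact ⟨LinearMap.mulRight F (evalH F ψ (embedMonomial F H y)) ∘ₗ E, fun u => by
        simp [hE, h_indep hy]⟩

theorem exists_linearMap_evalH_update (ψ : ℕ → A) {m : ℕ} {M : Multiset ℕ} (hM : M.count m = 1)
    {f : FreeNA F H} (hf : f ∈ spanMonomials F H M) :
    ∃ E : A →ₗ[F] A, ∀ u, E u = evalH F (Function.update ψ m u) f := by
  induction hf using span_induction with
  | mem _ hx =>
    obtain ⟨w, rfl, rfl⟩ := hx
    exact exists_linearMap_evalH_update_embedMonomial ψ w hM
  | zero => exact ⟨0, fun u => by simp⟩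
  | add _ _ _ _ hx hy =>
    obtain ⟨E₁, hE₁⟩ := hx
    obtain ⟨E₂, hE₂⟩ := hy
    exact ⟨E₁ + E₂, fun u => by simp [hE₁, hE₂]⟩
  | smul c _ _ hx =>
    obtain ⟨E, hE⟩ := hx
    exact ⟨c • E, fun u => by simp [hE]⟩

end Evaluation

structure GenActionData (H A : Type) [Semiring H] [NonUnitalNonAssocSemiring A] [Module H A] where
  k : H → ℕ
  h₁ : (h : H) → Fin (k h) → H
  h₂ : (h : H) → Fin (k h) → H
  h₃ : (h : H) → Fin (k h) → H
  h₄ : (h : H) → Fin (k h) → H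
  smul_mul (h : H) (a b : A) :
    h • (a * b) = ∑ i, ((h₁ h i • a) * (h₂ h i • b) + (h₃ h i • b) * (h₄ h i • a))

section GenAction

variable {F : Type} [Field F] {H A : Type} [Semiring H] [NonUnitalNonAssocSemiring A] [Module H A]

theorem IsGenAction.nonempty_genActionData (hact : IsGenAction H A) :
    Nonempty (GenActionData H A) := by
  choose k h₁ h₂ h₃ h₄ hspec using hact
  exact ⟨⟨k, h₁, h₂, h₃, h₄, hspec⟩⟩

theorem IsHSimple.span_mul_eq_top [Module F A] [SMulCommClass F H A] (hact : IsGenAction H A)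
    (hsimple : IsHSimple F H A) : span F {x : A | ∃ a b : A, a * b = x} = ⊤ := by
  obtain ⟨⟨a₀, b₀, hab⟩, hmin⟩ := hsimple
  set P := span F {x : A | ∃ a b : A, a * b = x}
  have h_smul (h : H) (x : A) (hx : x ∈ P) : h • x ∈ P := by
    induction hx using span_induction with
    | mem _ hx =>
      obtain ⟨a, b, rfl⟩ := hx
      obtain ⟨k, h₁, h₂, h₃, h₄, hk⟩ := hact h
      rw [hk]
      exact sum_mem fun i _ => add_mem (subset_span ⟨_, _, rfl⟩) (subset_span ⟨_, _, rfl⟩)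
    | zero => simp
    | add _ _ _ _ hx hy => rw [smul_add]; exact add_mem hx hy
    | smul c _ _ hx => rw [← smul_comm c h]; exact P.smul_mem c hx
  refine (hmin P (fun a x _ => subset_span ⟨a, x, rfl⟩) (fun a x _ => subset_span ⟨x, a, rfl⟩)
    h_smul).resolve_left fun hP => hab ?_
  rw [← mem_bot F, ← hP]
  exact subset_span ⟨a₀, b₀, rfl⟩

variable (F) in
/-- The substitution `x_m ↦ x_m x_{m+1}` for `H`-polynomials: since `h` cannot be moved inside a
product, `x_m^h` is replaced by the expansion of `h (x_m x_{m+1})` that `D` provides. -/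
def substMul (D : GenActionData H A) (m : ℕ) : FreeNA F H →ₙₐ[F] FreeNA F H :=
  lift F fun p => if p.1 = m then
      ∑ i, (of F (m, D.h₁ p.2 i) * of F (m + 1, D.h₂ p.2 i)
        + of F (m + 1, D.h₃ p.2 i) * of F (m, D.h₄ p.2 i))
    else of F p

theorem substMul_embedMonomial_mem (D : GenActionData H A) (m : ℕ) (w : FreeMagma (ℕ × H)) :
    substMul F D m (embedMonomial F H w) ∈ spanMonomials F H
      ((mleaves w).map Prod.fst
        + Multiset.replicate (((mleaves w).map Prod.fst).count m) (m + 1)) := by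
  induction w with
  | ih1 a =>
    rw [embedMonomial_of, substMul, lift_of_apply]
    change _ ∈ spanMonomials F H
      ({a.1} + Multiset.replicate (({a.1} : Multiset ℕ).count m) (m + 1))
    split_ifs with ha
    · rw [ha, Multiset.count_singleton_self, Multiset.replicate_one]
      refine sum_mem fun i _ => add_mem (mul_mem_spanMonomials (of_mem_spanMonomials m _)
        (of_mem_spanMonomials (m + 1) _)) ?_
      rw [add_comm]
      exact mul_mem_spanMonomials (of_mem_spanMonomials (m + 1) _) (of_mem_spanMonomials m _)
    · rw [Multiset.count_eq_zero.mpr (by simpa [eq_comm] using ha), Multiset.replicate_zero,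
        add_zero]
      exact of_mem_spanMonomials a.1 a.2
  | ih2 x y ihx ihy =>
    have := mul_mem_spanMonomials ihx ihy
    rwa [add_add_add_comm, ← Multiset.replicate_add, ← Multiset.count_add,
      ← Multiset.map_add, ← map_mul, ← map_mul] at this

theorem substMul_mem_spanMonomials (D : GenActionData H A) (m : ℕ) {M : Multiset ℕ}
    {f : FreeNA F H} (hf : f ∈ spanMonomials F H M) :
    substMul F D m f ∈ spanMonomials F H (M + Multiset.replicate (M.count m) (m + 1)) := by
  induction hf using span_induction with
  | mem _ hx =>
    obtain ⟨w, rfl, rfl⟩ := hx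
    exact substMul_embedMonomial_mem D m w
  | zero => simp
  | add _ _ _ _ hx hy => rw [map_add]; exact add_mem hx hy
  | smul c _ _ hx => rw [map_smul]; exact smul_mem _ c hx

theorem substMul_mem_Wn (D : GenActionData H A) {m : ℕ} {f : FreeNA F H}
    (hf : f ∈ Wn F H (m + 1)) : substMul F D m f ∈ Wn F H (m + 2) := by
  have := substMul_mem_spanMonomials D m hf
  rwa [count_range_succ_self, Multiset.replicate_one, add_comm, Multiset.singleton_add,
    ← Multiset.range_succ] at this

variable [Module F A] [SMulCommClass F A A] [IsScalarTower F A A]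

theorem evalH_substMul (D : GenActionData H A) (m : ℕ) (ψ : ℕ → A) (f : FreeNA F H) :
    evalH F ψ (substMul F D m f) = evalH F (Function.update ψ m (ψ m * ψ (m + 1))) f := by
  suffices (evalH F ψ).comp (substMul F D m) = evalH F (Function.update ψ m (ψ m * ψ (m + 1))) from
    DFunLike.congr_fun this f
  ext ⟨i, h⟩
  change evalH F ψ (substMul F D m (of F (i, h))) = evalH F _ (of F (i, h))
  rw [substMul, lift_of_apply, evalH_of]
  by_cases hi : i = m
  · subst hi
    simp [evalH_of, D.smul_mul]
  · simp [evalH_of, hi]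

theorem substMul_mem_IdH (D : GenActionData H A) (m : ℕ) {f : FreeNA F H}
    (hf : f ∈ IdH F A H) : substMul F D m f ∈ IdH F A H := by
  rw [mem_IdH_iff] at hf ⊢
  exact fun ψ => (evalH_substMul D m ψ f).trans (hf _)

theorem mem_IdH_of_substMul_mem [SMulCommClass F H A]
    (hA : span F {x : A | ∃ a b : A, a * b = x} = ⊤) (D : GenActionData H A) {m : ℕ}
    {f : FreeNA F H} (hf : f ∈ Wn F H (m + 1)) (hDf : substMul F D m f ∈ IdH F A H) : f ∈ IdH F A H := by
  rw [mem_IdH_iff] at hDf ⊢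
  intro ψ
  obtain ⟨E, hE⟩ := exists_linearMap_evalH_update ψ (count_range_succ_self m) hf
  have hE_mul (a b : A) : E (a * b) = 0 := by
    set φ := Function.update (Function.update ψ m a) (m + 1) b
    have hφ : ∀ i ∈ Multiset.range (m + 1),
        Function.update φ m (a * b) i = Function.update ψ m (a * b) i := by
      intro i hi
      have : i ≠ m + 1 := (Multiset.mem_range.mp hi).ne
      by_cases him : i = m <;> simp [φ, him, this]
    have hφ_mul : φ m * φ (m + 1) = a * b := by simp [φ]
    rw [hE, ← evalH_congr_of_mem_spanMonomials hf hφ, ← hφ_mul, ← evalH_substMul]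
    exact hDf φ
  have hE_zero : E = 0 :=
    LinearMap.ext_on hA fun _ ⟨a, b, hab⟩ => hab ▸ hE_mul a b
  simpa [hE_zero] using (hE (ψ m)).symm

end GenAction

end PIExp

theorem H_codim_nondecreasing_of_H_simple_general
    (F H A : Type) [Field F] [Ring H]
    [NonUnitalNonAssocRing A] [Module F A] [SMulCommClass F A A] [IsScalarTower F A A]
    [Module H A] [SMulCommClass F H A]
    (hact : PIExp.IsGenAction H A) (hsimple : PIExp.IsHSimple F H A) (n : ℕ) :
    PIExp.codimRank F H (PIExp.IdH F A H) n ≤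
      PIExp.codimRank F H (PIExp.IdH F A H) (n + 1) := by
  obtain ⟨D⟩ := hact.nonempty_genActionData
  rcases n with _ | m
  · rw [PIExp.codimRank, PIExp.Wn_zero, Submodule.map_bot, rank_bot]
    exact zero_le
  · have hA := PIExp.IsHSimple.span_mul_eq_top hact hsimple
    exact PIExp.rank_map_mkQ_le_of_mem_iff (PIExp.substMul F D m : PIExp.FreeNA F H →ₗ[F] _)
      (by rintro _ ⟨f, hf, rfl⟩; exact PIExp.substMul_mem_Wn D hf) fun _ hf =>
        ⟨PIExp.mem_IdH_of_substMul_mem hA D hf, PIExp.substMul_mem_IdH D m⟩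

/-- **Lemma (H-codimensions of an H-simple algebra are non-decreasing).**
If `A` is an `H`-simple algebra with a generalized `H`-action over an arbitrary field `F`,
then `c_n^H(A) ≤ c_{n+1}^H(A)` for all `n`. -/
theorem H_codim_nondecreasing_of_H_simple
    (F H A : Type) [Field F] [Ring H] [Algebra F H]
    [NonUnitalNonAssocRing A] [Module F A] [SMulCommClass F A A] [IsScalarTower F A A]
    [Module H A] [IsScalarTower F H A] [SMulCommClass F H A]
    (hact : PIExp.IsGenAction H A) (hsimple : PIExp.IsHSimple F H A) (n : ℕ) :
    PIExp.codimRank F H (PIExp.IdH F A H) n ≤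
      PIExp.codimRank F H (PIExp.IdH F A H) (n + 1) :=
  H_codim_nondecreasing_of_H_simple_general F H A hact hsimple n
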